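/- Weak duality for the first-order continuous problem (Corollary 4.1 direction): let φ : ℝⁿ → ℝ be convex, F : ℝⁿ ⇉ ℝⁿ with nonempty graph, Q₀ ⊆ ℝⁿ nonempty. For every x ∈ C¹([0,1], ℝⁿ) with x'(t) ∈ F(x(t)) for all t and x(0) ∈ Q₀, and every x* ∈ C¹([0,1], ℝⁿ), φ(x(1)) ≥ −φ*(−x*(1)) + ∫₀¹ M_F(−x*'(t), x*(t)) dt − W_{Q₀}(x*(0)), provided t ↦ M_F(−x*'(t), x*(t)) is integrable and W_{Q₀}(x*(0)) < ∞. -/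

import Mathlib

/-!
Evaluate everything along the feasible arc `x`. Fenchel–Young at `x 1` bounds the conjugate term,
`x 0 ∈ Q₀` bounds the support-function term, and `x' t ∈ F (x t)` bounds the integrand `m t` by
`⟨x t, -x*' t⟩ - ⟨x' t, x* t⟩`, whose integral is `⟨x 0, x* 0⟩ - ⟨x 1, x* 1⟩` by integration
by parts. The boundary terms cancel, leaving `φ (x 1)`.
-/

open Matrix

section DotProduct

variable {ι : Type*} [Fintype ι]

theorem HasDerivAt.dotProduct {u v : ℝ → ι → ℝ} {u' v' : ι → ℝ} {t : ℝ}
    (hu : HasDerivAt u u' t) (hv : HasDerivAt v v' t) :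
    HasDerivAt (fun s => u s ⬝ᵥ v s) (u' ⬝ᵥ v t + u t ⬝ᵥ v') t := by
  have hcomp (i : ι) : HasDerivAt (fun s => u s i * v s i) (u' i * v t i + u t i * v' i) t :=
    (hasDerivAt_pi.1 hu i).mul (hasDerivAt_pi.1 hv i)
  exact (HasDerivAt.fun_sum fun i (_ : i ∈ Finset.univ) => hcomp i).congr_deriv
    Finset.sum_add_distrib

theorem ContDiff.continuous_dotProduct_neg_deriv_sub {u v : ℝ → ι → ℝ}
    (hu : ContDiff ℝ 1 u) (hv : ContDiff ℝ 1 v) :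
    Continuous fun t => u t ⬝ᵥ -deriv v t - deriv u t ⬝ᵥ v t :=
  (hu.continuous.dotProduct (hv.continuous_deriv le_rfl).neg).sub
    ((hu.continuous_deriv le_rfl).dotProduct hv.continuous)

theorem integral_dotProduct_neg_deriv_sub {u v : ℝ → ι → ℝ}
    (hu : ContDiff ℝ 1 u) (hv : ContDiff ℝ 1 v) (a b : ℝ) :
    ∫ t in a..b, (u t ⬝ᵥ -deriv v t - deriv u t ⬝ᵥ v t) = u a ⬝ᵥ v a - u b ⬝ᵥ v b := by
  have hderiv (t : ℝ) : HasDerivAt (fun s => -(u s ⬝ᵥ v s))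
      (u t ⬝ᵥ -deriv v t - deriv u t ⬝ᵥ v t) t := by
    refine ((hu.differentiable one_ne_zero t).hasDerivAt.dotProduct
      (hv.differentiable one_ne_zero t).hasDerivAt).fun_neg.congr_deriv ?_
    rw [dotProduct_neg]
    ring
  rw [intervalIntegral.integral_eq_sub_of_hasDerivAt (fun t _ => hderiv t)
    ((hu.continuous_dotProduct_neg_deriv_sub hv).intervalIntegrable a b)]
  ring

theorem integral_le_dotProduct_sub_of_le {u v : ℝ → ι → ℝ} {m : ℝ → ℝ} {a b : ℝ}
    (hab : a ≤ b) (hu : ContDiff ℝ 1 u) (hv : ContDiff ℝ 1 v)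
    (hm : IntervalIntegrable m MeasureTheory.volume a b)
    (hle : ∀ t ∈ Set.Icc a b, m t ≤ u t ⬝ᵥ -deriv v t - deriv u t ⬝ᵥ v t) :
    ∫ t in a..b, m t ≤ u a ⬝ᵥ v a - u b ⬝ᵥ v b :=
  (intervalIntegral.integral_mono_on hab hm
    ((hu.continuous_dotProduct_neg_deriv_sub hv).intervalIntegrable a b) hle).trans_eq
    (integral_dotProduct_neg_deriv_sub hu hv a b)

end DotProduct

section Duality

variable {ι : Type*} [Fintype ι]

noncomputable def fenchelConjugate (φ : (ι → ℝ) → ℝ) (p : ι → ℝ) : EReal :=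
  ⨆ y, ((y ⬝ᵥ p - φ y : ℝ) : EReal)

/-- `M_F(p, q)`: the infimum of `⟨y, p⟩ - ⟨v, q⟩` over the graph of `F`. -/
noncomputable def graphInf (F : (ι → ℝ) → Set (ι → ℝ)) (p q : ι → ℝ) : EReal :=
  ⨅ y, ⨅ v ∈ F y, ((y ⬝ᵥ p - v ⬝ᵥ q : ℝ) : EReal)

noncomputable def supportFun (Q : Set (ι → ℝ)) (p : ι → ℝ) : EReal :=
  ⨆ y ∈ Q, ((y ⬝ᵥ p : ℝ) : EReal)

theorem neg_fenchelConjugate_le (φ : (ι → ℝ) → ℝ) (y p : ι → ℝ) :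
    -fenchelConjugate φ p ≤ ((φ y - y ⬝ᵥ p : ℝ) : EReal) := by
  rw [← neg_sub, EReal.coe_neg, EReal.neg_le_neg_iff]
  exact le_iSup (fun y => ((y ⬝ᵥ p - φ y : ℝ) : EReal)) y

theorem graphInf_le {F : (ι → ℝ) → Set (ι → ℝ)} {y v : ι → ℝ} (hv : v ∈ F y) (p q : ι → ℝ) :
    graphInf F p q ≤ ((y ⬝ᵥ p - v ⬝ᵥ q : ℝ) : EReal) :=
  iInf_le_of_le y (iInf₂_le v hv)

theorem le_supportFun {Q : Set (ι → ℝ)} {y : ι → ℝ} (hy : y ∈ Q) (p : ι → ℝ) :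
    ((y ⬝ᵥ p : ℝ) : EReal) ≤ supportFun Q p :=
  le_iSup₂ (f := fun y (_ : y ∈ Q) => ((y ⬝ᵥ p : ℝ) : EReal)) y hy

end Duality

theorem first_order_weak_duality_general (n : ℕ)
    (φ : (Fin n → ℝ) → ℝ)
    (F : (Fin n → ℝ) → Set (Fin n → ℝ))
    (Q₀ : Set (Fin n → ℝ))
    (x xs : ℝ → (Fin n → ℝ)) (hx : ContDiff ℝ 1 x) (hxs : ContDiff ℝ 1 xs)
    (hincl : ∀ t ∈ Set.Icc (0:ℝ) 1, deriv x t ∈ F (x t)) (hx0 : x 0 ∈ Q₀)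
    (m : ℝ → ℝ)
    (hm : ∀ t, (m t : EReal) =
      ⨅ y : Fin n → ℝ, ⨅ v ∈ F y, ((y ⬝ᵥ (-(deriv xs t)) - v ⬝ᵥ xs t : ℝ) : EReal))
    (hmint : IntervalIntegrable m MeasureTheory.volume 0 1)
    (w : ℝ) (hw : (w : EReal) = ⨆ y ∈ Q₀, ((y ⬝ᵥ xs 0 : ℝ) : EReal)) :
    -(⨆ y : Fin n → ℝ, ((y ⬝ᵥ (-(xs 1)) - φ y : ℝ) : EReal)) +
        (((∫ t in (0:ℝ)..1, m t) - w : ℝ) : EReal) ≤ (φ (x 1) : EReal) := by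
  have hconj := neg_fenchelConjugate_le φ (x 1) (-(xs 1))
  have hsupp : x 0 ⬝ᵥ xs 0 ≤ w :=
    EReal.coe_le_coe_iff.1 <| (le_supportFun hx0 (xs 0)).trans_eq hw.symm
  have hint : ∫ t in (0:ℝ)..1, m t ≤ x 0 ⬝ᵥ xs 0 - x 1 ⬝ᵥ xs 1 :=
    integral_le_dotProduct_sub_of_le zero_le_one hx hxs hmint fun t ht =>
      EReal.coe_le_coe_iff.1 <| (hm t).trans_le (graphInf_le (hincl t ht) _ _)
  calc _ ≤ ((φ (x 1) - x 1 ⬝ᵥ -xs 1 : ℝ) : EReal) + ((-(x 1 ⬝ᵥ xs 1) : ℝ) : EReal) :=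
        add_le_add hconj (EReal.coe_le_coe_iff.2 (by linarith))
    _ = (φ (x 1) : EReal) := by
        rw [← EReal.coe_add, dotProduct_neg]
        ring_nf

/-- Weak duality for the first-order continuous problem: for
every feasible arc x and every C¹ adjoint arc x*,
φ(x(1)) ≥ −φ*(−x*(1)) + ∫₀¹ M_F(−x*'(t), x*(t)) dt − W_{Q₀}(x*(0)),
provided the integrand is (real-valued and) integrable and W_{Q₀}(x*(0)) < ∞. -/
theorem first_order_weak_duality (n : ℕ)
    (φ : (Fin n → ℝ) → ℝ) (hφ : ConvexOn ℝ Set.univ φ)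
    (F : (Fin n → ℝ) → Set (Fin n → ℝ))
    (hF : ∃ p : (Fin n → ℝ) × (Fin n → ℝ), p.2 ∈ F p.1)
    (Q₀ : Set (Fin n → ℝ)) (hQ₀ : Q₀.Nonempty)
    (x xs : ℝ → (Fin n → ℝ)) (hx : ContDiff ℝ 1 x) (hxs : ContDiff ℝ 1 xs)
    (hincl : ∀ t ∈ Set.Icc (0:ℝ) 1, deriv x t ∈ F (x t)) (hx0 : x 0 ∈ Q₀)
    (m : ℝ → ℝ)
    (hm : ∀ t, (m t : EReal) =
      ⨅ y : Fin n → ℝ, ⨅ v ∈ F y, ((y ⬝ᵥ (-(deriv xs t)) - v ⬝ᵥ xs t : ℝ) : EReal))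
    (hmint : IntervalIntegrable m MeasureTheory.volume 0 1)
    (w : ℝ) (hw : (w : EReal) = ⨆ y ∈ Q₀, ((y ⬝ᵥ xs 0 : ℝ) : EReal)) :
    -(⨆ y : Fin n → ℝ, ((y ⬝ᵥ (-(xs 1)) - φ y : ℝ) : EReal)) +
        (((∫ t in (0:ℝ)..1, m t) - w : ℝ) : EReal) ≤ (φ (x 1) : EReal) :=
  first_order_weak_duality_general n φ F Q₀ x xs hx hxs hincl hx0 m hm hmint w hw
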